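/- Let p_LL(β|ψ₁,ψ₂) be the marginal density of β when β|λ ~ N(0,λ²) and λ has the log-Laplace prior with left scale ψ₁ and right scale ψ₂. If ψ₁ > 1 then p_LL(β|ψ₁,ψ₂) = O(|β|^{−1+1/ψ₁}) as |β| → 0; if ψ₁ = 1 then p_LL(β|ψ₁,ψ₂) = O(−log|β|) as |β| → 0; and if ψ₁ < 1 then p_LL(β|ψ₁,ψ₂) = O(1) as |β| → 0, in all cases for any ψ₂ > 0. -/

import Mathlib

open MeasureTheory Real Set Filter

/-- Marginal density of β for a N(0,λ²) kernel under the log-Laplace prior. -/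
noncomputable def logLaplaceMarginal (ψ₁ ψ₂ β : ℝ) : ℝ :=
  ∫ l in Ioi (0 : ℝ),
    (2 * π * l ^ 2) ^ (-(1 : ℝ) / 2) * Real.exp (-β ^ 2 / (2 * l ^ 2)) *
      (if l ≤ 1 then (1 / (2 * ψ₁)) * l ^ (-1 + 1 / ψ₁)
       else (1 / (2 * ψ₂)) * l ^ (-1 - 1 / ψ₂))

/-!
The Gaussian factor is at most `1/λ` and, since `e^{-x} ≤ 1/x`, also at most `2λ/β²`. Split the
`λ`-integral at `|β|` and `1`: the second bound makes the piece over `(0, |β|]` at most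
`|β|^{-1+1/ψ₁}`, the first bounds the piece over `(1, ∞)` by `1/2` and the piece over `(|β|, 1]` by
`(1/(2ψ₁)) ∫_{|β|}^1 λ^{-2+1/ψ₁} dλ`. This last integral is of order `|β|^{-1+1/ψ₁}`, `-log |β|` or
`1` according as the exponent `-2 + 1/ψ₁` is below, equal to or above `-1`.
-/

open Topology

noncomputable def gaussianKernel (β l : ℝ) : ℝ :=
  (2 * π * l ^ 2) ^ (-(1 : ℝ) / 2) * Real.exp (-β ^ 2 / (2 * l ^ 2))

noncomputable def logLaplacePrior (ψ₁ ψ₂ l : ℝ) : ℝ :=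
  if l ≤ 1 then (1 / (2 * ψ₁)) * l ^ (-1 + 1 / ψ₁) else (1 / (2 * ψ₂)) * l ^ (-1 - 1 / ψ₂)

theorem logLaplaceMarginal_eq_integral (ψ₁ ψ₂ β : ℝ) :
    logLaplaceMarginal ψ₁ ψ₂ β = ∫ l in Ioi 0, gaussianKernel β l * logLaplacePrior ψ₁ ψ₂ l :=
  rfl

theorem integrableOn_and_setIntegral_le_of_le {α : Type*} [MeasurableSpace α] {μ : Measure α}
    {f g : α → ℝ} {s : Set α} (hs : MeasurableSet s) (hf : AEStronglyMeasurable f (μ.restrict s))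
    (hg : IntegrableOn g s μ) (hf₀ : ∀ x ∈ s, 0 ≤ f x) (hfg : ∀ x ∈ s, f x ≤ g x) :
    IntegrableOn f s μ ∧ ∫ x in s, f x ∂μ ≤ ∫ x in s, g x ∂μ := by
  have hfi : IntegrableOn f s μ := hg.mono' hf <| (ae_restrict_iff' hs).2 <| ae_of_all _
    fun x hx => (norm_of_nonneg (hf₀ x hx)).trans_le (hfg x hx)
  exact ⟨hfi, setIntegral_mono_on hfi hg hs hfg⟩

theorem integral_rpow_le_of_lt_neg_one {r b : ℝ} (hb : 0 < b) (hr : r < -1) :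
    ∫ x in b..1, x ^ r ≤ b ^ (r + 1) / -(r + 1) := by
  rw [integral_rpow (Or.inr ⟨hr.ne, notMem_uIcc_of_lt hb one_pos⟩), one_rpow, ← neg_div_neg_eq,
    neg_sub]
  gcongr
  · linarith
  · exact sub_le_self _ zero_le_one

theorem integral_rpow_le_of_neg_one_lt {r b : ℝ} (hb : 0 ≤ b) (hr : -1 < r) :
    ∫ x in b..1, x ^ r ≤ 1 / (r + 1) := by
  rw [integral_rpow (Or.inl hr), one_rpow]
  gcongr
  · linarith
  · exact sub_le_self _ (rpow_nonneg hb _)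

theorem isBigO_nhdsNE_zero_of_abs_le {f g : ℝ → ℝ} {ε : ℝ} (c : ℝ) (hε : 0 < ε)
    (h : ∀ x, x ≠ 0 → |x| ≤ ε → ‖f x‖ ≤ c * ‖g x‖) : f =O[𝓝[≠] 0] g := by
  refine Asymptotics.IsBigO.of_bound c ?_
  filter_upwards [self_mem_nhdsWithin,
    nhdsWithin_le_nhds (Metric.closedBall_mem_nhds 0 hε)] with x hx hxε
  exact h x hx (by simpa using hxε)

theorem gaussianKernel_nonneg (β l : ℝ) : 0 ≤ gaussianKernel β l := by
  unfold gaussianKernel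
  have := pi_pos
  positivity

theorem two_pi_mul_sq_rpow_le_inv {l : ℝ} (hl : 0 < l) :
    (2 * π * l ^ 2) ^ (-(1 : ℝ) / 2) ≤ l⁻¹ :=
  calc (2 * π * l ^ 2) ^ (-(1 : ℝ) / 2) ≤ (l ^ 2) ^ (-(1 : ℝ) / 2) :=
        rpow_le_rpow_of_nonpos (by positivity)
          (le_mul_of_one_le_left (sq_nonneg l) (by nlinarith [pi_gt_three])) (by norm_num)
    _ = l⁻¹ := by
        rw [← rpow_natCast, ← rpow_mul hl.le]
        norm_num [rpow_neg_one]

theorem gaussianKernel_le_inv (β : ℝ) {l : ℝ} (hl : 0 < l) : gaussianKernel β l ≤ l⁻¹ := by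
  have hexp : Real.exp (-β ^ 2 / (2 * l ^ 2)) ≤ 1 :=
    exp_le_one_iff.2 (div_nonpos_of_nonpos_of_nonneg (by nlinarith) (by positivity))
  simpa [gaussianKernel] using
    mul_le_mul (two_pi_mul_sq_rpow_le_inv hl) hexp (exp_pos _).le (by positivity)

theorem gaussianKernel_le {β : ℝ} (hβ : β ≠ 0) {l : ℝ} (hl : 0 < l) :
    gaussianKernel β l ≤ 2 * l / β ^ 2 := by
  have hx : 0 < β ^ 2 / (2 * l ^ 2) := by positivity
  have hexp : Real.exp (-β ^ 2 / (2 * l ^ 2)) ≤ (β ^ 2 / (2 * l ^ 2))⁻¹ := by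
    rw [neg_div, exp_neg]
    exact inv_anti₀ hx (by linarith [add_one_le_exp (β ^ 2 / (2 * l ^ 2))])
  calc gaussianKernel β l ≤ l⁻¹ * (β ^ 2 / (2 * l ^ 2))⁻¹ :=
        mul_le_mul (two_pi_mul_sq_rpow_le_inv hl) hexp (exp_pos _).le (by positivity)
    _ = 2 * l / β ^ 2 := by field_simp

theorem gaussianKernel_mul_rpow_le (β : ℝ) {l c : ℝ} (hl : 0 < l) (hc : 0 ≤ c) (a : ℝ) :
    gaussianKernel β l * (c * l ^ a) ≤ c * l ^ (a - 1) :=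
  calc gaussianKernel β l * (c * l ^ a) ≤ l⁻¹ * (c * l ^ a) := by
        gcongr
        exact gaussianKernel_le_inv β hl
    _ = c * l ^ (a - 1) := by rw [rpow_sub_one hl.ne']; ring

theorem logLaplacePrior_nonneg {ψ₁ ψ₂ l : ℝ} (h₁ : 0 < ψ₁) (h₂ : 0 < ψ₂) (hl : 0 ≤ l) :
    0 ≤ logLaplacePrior ψ₁ ψ₂ l := by
  unfold logLaplacePrior
  split_ifs <;> positivity

theorem logLaplaceMarginal_nonneg {ψ₁ ψ₂ : ℝ} (h₁ : 0 < ψ₁) (h₂ : 0 < ψ₂) (β : ℝ) :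
    0 ≤ logLaplaceMarginal ψ₁ ψ₂ β :=
  setIntegral_nonneg measurableSet_Ioi fun _ hl =>
    mul_nonneg (gaussianKernel_nonneg _ _) (logLaplacePrior_nonneg h₁ h₂ (le_of_lt hl))

theorem measurable_gaussianKernel_mul_logLaplacePrior (ψ₁ ψ₂ β : ℝ) :
    Measurable fun l => gaussianKernel β l * logLaplacePrior ψ₁ ψ₂ l := by
  unfold gaussianKernel logLaplacePrior
  exact (by fun_prop : Measurable _).mul
    (Measurable.ite measurableSet_Iic (by fun_prop) (by fun_prop))

section Marginal

variable {ψ₁ ψ₂ β : ℝ}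

theorem integral_Ioc_zero_abs_le (h₁ : 0 < ψ₁) (h₂ : 0 < ψ₂) (hβ : β ≠ 0) (hβ1 : |β| ≤ 1) :
    IntegrableOn (fun l => gaussianKernel β l * logLaplacePrior ψ₁ ψ₂ l) (Ioc 0 |β|) ∧
      ∫ l in Ioc 0 |β|, gaussianKernel β l * logLaplacePrior ψ₁ ψ₂ l ≤ |β| ^ (-1 + 1 / ψ₁) := by
  have hb : 0 < |β| := abs_pos.2 hβ
  have hs : 0 < 1 / ψ₁ := by positivity
  have hg : IntegrableOn (fun l : ℝ => (ψ₁ * β ^ 2)⁻¹ * l ^ (1 / ψ₁)) (Ioc 0 |β|) :=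
    ((intervalIntegral.intervalIntegrable_rpow' (by linarith)).1).const_mul _
  refine (integrableOn_and_setIntegral_le_of_le measurableSet_Ioc
    (measurable_gaussianKernel_mul_logLaplacePrior ψ₁ ψ₂ β).aestronglyMeasurable hg
    (fun l hl => mul_nonneg (gaussianKernel_nonneg _ _) (logLaplacePrior_nonneg h₁ h₂ hl.1.le))
    fun l hl => ?_).imp_right (·.trans ?_)
  · rw [logLaplacePrior, if_pos (hl.2.trans hβ1)]
    calc gaussianKernel β l * (1 / (2 * ψ₁) * l ^ (-1 + 1 / ψ₁))
        ≤ 2 * l / β ^ 2 * (1 / (2 * ψ₁) * l ^ (-1 + 1 / ψ₁)) :=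
          mul_le_mul_of_nonneg_right (gaussianKernel_le hβ hl.1) (by have := hl.1; positivity)
      _ = (ψ₁ * β ^ 2)⁻¹ * (l ^ (-1 + 1 / ψ₁) * l) := by field_simp
      _ = (ψ₁ * β ^ 2)⁻¹ * l ^ (1 / ψ₁) := by rw [← rpow_add_one hl.1.ne']; ring_nf
  · have hpow : |β| ^ (1 / ψ₁ + 1) = |β| ^ (-1 + 1 / ψ₁) * β ^ 2 := by
      rw [← sq_abs β, ← rpow_two, ← rpow_add hb]
      ring_nf
    rw [integral_const_mul, ← intervalIntegral.integral_of_le hb.le,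
      integral_rpow (Or.inl (by linarith)), zero_rpow (by positivity), sub_zero, hpow]
    calc (ψ₁ * β ^ 2)⁻¹ * (|β| ^ (-1 + 1 / ψ₁) * β ^ 2 / (1 / ψ₁ + 1))
        = |β| ^ (-1 + 1 / ψ₁) / (1 + ψ₁) := by field_simp
      _ ≤ |β| ^ (-1 + 1 / ψ₁) := div_le_self (by positivity) (by linarith)

theorem integral_Ioc_abs_one_le (h₁ : 0 < ψ₁) (h₂ : 0 < ψ₂) (hβ : β ≠ 0) (hβ1 : |β| ≤ 1) :
    IntegrableOn (fun l => gaussianKernel β l * logLaplacePrior ψ₁ ψ₂ l) (Ioc |β| 1) ∧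
      ∫ l in Ioc |β| 1, gaussianKernel β l * logLaplacePrior ψ₁ ψ₂ l ≤
        1 / (2 * ψ₁) * ∫ l in |β|..1, l ^ (-2 + 1 / ψ₁) := by
  have hb : 0 < |β| := abs_pos.2 hβ
  have hg : IntegrableOn (fun l : ℝ => 1 / (2 * ψ₁) * l ^ (-2 + 1 / ψ₁)) (Ioc |β| 1) :=
    ((intervalIntegral.intervalIntegrable_rpow
      (Or.inr (notMem_uIcc_of_lt hb one_pos))).1).const_mul _
  refine (integrableOn_and_setIntegral_le_of_le measurableSet_Ioc
    (measurable_gaussianKernel_mul_logLaplacePrior ψ₁ ψ₂ β).aestronglyMeasurable hg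
    (fun l hl => mul_nonneg (gaussianKernel_nonneg _ _)
      (logLaplacePrior_nonneg h₁ h₂ (hb.le.trans hl.1.le)))
    fun l hl => ?_).imp_right (·.trans_eq ?_)
  · rw [logLaplacePrior, if_pos hl.2, show (-2 : ℝ) + 1 / ψ₁ = -1 + 1 / ψ₁ - 1 by ring]
    exact gaussianKernel_mul_rpow_le β (hb.trans hl.1) (by positivity) _
  · rw [integral_const_mul, intervalIntegral.integral_of_le hβ1]

theorem integral_Ioi_one_le (h₁ : 0 < ψ₁) (h₂ : 0 < ψ₂) :
    IntegrableOn (fun l => gaussianKernel β l * logLaplacePrior ψ₁ ψ₂ l) (Ioi 1) ∧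
      ∫ l in Ioi 1, gaussianKernel β l * logLaplacePrior ψ₁ ψ₂ l ≤ 1 / 2 := by
  have hr : -2 - 1 / ψ₂ < -1 := by linarith [show 0 < 1 / ψ₂ by positivity]
  have hg : IntegrableOn (fun l : ℝ => 1 / (2 * ψ₂) * l ^ (-2 - 1 / ψ₂)) (Ioi 1) :=
    (integrableOn_Ioi_rpow_of_lt hr one_pos).const_mul _
  refine (integrableOn_and_setIntegral_le_of_le measurableSet_Ioi
    (measurable_gaussianKernel_mul_logLaplacePrior ψ₁ ψ₂ β).aestronglyMeasurable hg
    (fun l hl => mul_nonneg (gaussianKernel_nonneg _ _)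
      (logLaplacePrior_nonneg h₁ h₂ (zero_le_one.trans hl.le)))
    fun l hl => ?_).imp_right (·.trans ?_)
  · rw [logLaplacePrior, if_neg (not_le.2 hl), show (-2 : ℝ) - 1 / ψ₂ = -1 - 1 / ψ₂ - 1 by ring]
    exact gaussianKernel_mul_rpow_le β (zero_lt_one.trans hl) (by positivity) _
  · rw [integral_const_mul, integral_Ioi_rpow_of_lt hr one_pos, one_rpow]
    calc 1 / (2 * ψ₂) * (-1 / (-2 - 1 / ψ₂ + 1)) = 1 / 2 * (1 / (ψ₂ + 1)) := by
          rw [show (-2 : ℝ) - 1 / ψ₂ + 1 = -((ψ₂ + 1) / ψ₂) by field_simp; ring]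
          field_simp
      _ ≤ 1 / 2 :=
          mul_le_of_le_one_right (by norm_num) ((div_le_one (by linarith)).2 (by linarith))

theorem logLaplaceMarginal_le (h₁ : 0 < ψ₁) (h₂ : 0 < ψ₂) (hβ : β ≠ 0) (hβ1 : |β| ≤ 1) :
    logLaplaceMarginal ψ₁ ψ₂ β ≤
      |β| ^ (-1 + 1 / ψ₁) + 1 / (2 * ψ₁) * (∫ l in |β|..1, l ^ (-2 + 1 / ψ₁)) + 1 / 2 := by
  obtain ⟨hi₁, hle₁⟩ := integral_Ioc_zero_abs_le (ψ₂ := ψ₂) h₁ h₂ hβ hβ1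
  obtain ⟨hi₂, hle₂⟩ := integral_Ioc_abs_one_le (ψ₂ := ψ₂) h₁ h₂ hβ hβ1
  obtain ⟨hi₃, hle₃⟩ := integral_Ioi_one_le (β := β) h₁ h₂
  have hsplit := Ioc_union_Ioc_eq_Ioc (abs_nonneg β) hβ1
  rw [logLaplaceMarginal_eq_integral, ← Ioc_union_Ioi_eq_Ioi zero_le_one,
    setIntegral_union Ioc_disjoint_Ioi_same measurableSet_Ioi (hsplit ▸ hi₁.union hi₂) hi₃,
    ← hsplit, setIntegral_union (Ioc_disjoint_Ioc_of_le le_rfl) measurableSet_Ioc hi₁ hi₂]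
  linarith

theorem logLaplaceMarginal_isBigO_rpow (h₂ : 0 < ψ₂) (hψ : 1 < ψ₁) :
    (fun β => logLaplaceMarginal ψ₁ ψ₂ β) =O[𝓝[≠] 0] fun β => |β| ^ (-1 + 1 / ψ₁) := by
  have h₁ : 0 < ψ₁ := one_pos.trans hψ
  have hs : 1 / ψ₁ < 1 := (div_lt_one h₁).2 hψ
  refine isBigO_nhdsNE_zero_of_abs_le (1 + 1 / (2 * ψ₁) / (1 - 1 / ψ₁) + 1 / 2) one_pos
    fun β hβ hβ1 => ?_
  have hb : 0 < |β| := abs_pos.2 hβ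
  have hone : 1 ≤ |β| ^ (-1 + 1 / ψ₁) :=
    one_le_rpow_of_pos_of_le_one_of_nonpos hb hβ1 (by linarith)
  have hJ := integral_rpow_le_of_lt_neg_one (r := -2 + 1 / ψ₁) hb (by linarith)
  rw [show (-2 : ℝ) + 1 / ψ₁ + 1 = -1 + 1 / ψ₁ by ring, show -(-1 + 1 / ψ₁) = 1 - 1 / ψ₁ by ring]
    at hJ
  rw [norm_of_nonneg (logLaplaceMarginal_nonneg h₁ h₂ β), norm_of_nonneg (by linarith)]
  have hJ' := mul_le_mul_of_nonneg_left hJ (by positivity : (0 : ℝ) ≤ 1 / (2 * ψ₁))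
  rw [mul_div_assoc', mul_div_right_comm] at hJ'
  linarith [logLaplaceMarginal_le h₁ h₂ hβ hβ1]

theorem logLaplaceMarginal_isBigO_log (h₂ : 0 < ψ₂) :
    (fun β => logLaplaceMarginal 1 ψ₂ β) =O[𝓝[≠] 0] fun β => -Real.log |β| := by
  refine isBigO_nhdsNE_zero_of_abs_le 2 (exp_pos (-1)) fun β hβ hβε => ?_
  have hb : 0 < |β| := abs_pos.2 hβ
  have hβ1 : |β| ≤ 1 := hβε.trans (exp_le_one_iff.2 (by norm_num))
  have hlog : Real.log |β| ≤ -1 := (log_le_log hb hβε).trans_eq (log_exp _)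
  have hJ : ∫ l in |β|..1, l ^ ((-2 : ℝ) + 1 / 1) = -Real.log |β| := by
    norm_num [rpow_neg_one, integral_inv_of_pos hb one_pos]
  have := logLaplaceMarginal_le one_pos h₂ hβ hβ1
  have hB : |β| ^ ((-1 : ℝ) + 1 / 1) = 1 := by norm_num
  rw [hJ, hB] at this
  rw [norm_of_nonneg (logLaplaceMarginal_nonneg one_pos h₂ β), norm_of_nonneg (by linarith)]
  linarith

theorem logLaplaceMarginal_isBigO_one (h₁ : 0 < ψ₁) (h₂ : 0 < ψ₂) (hψ : ψ₁ < 1) :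
    (fun β => logLaplaceMarginal ψ₁ ψ₂ β) =O[𝓝[≠] 0] fun _ => (1 : ℝ) := by
  have hs : 1 < 1 / ψ₁ := (one_lt_div h₁).2 hψ
  refine isBigO_nhdsNE_zero_of_abs_le (1 + 1 / (2 * ψ₁) / (1 / ψ₁ - 1) + 1 / 2) one_pos
    fun β hβ hβ1 => ?_
  have hB : |β| ^ (-1 + 1 / ψ₁) ≤ 1 := rpow_le_one (abs_nonneg β) hβ1 (by linarith)
  have hJ := integral_rpow_le_of_neg_one_lt (r := -2 + 1 / ψ₁) (abs_nonneg β) (by linarith)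
  rw [show (-2 : ℝ) + 1 / ψ₁ + 1 = 1 / ψ₁ - 1 by ring] at hJ
  rw [norm_of_nonneg (logLaplaceMarginal_nonneg h₁ h₂ β), norm_one, mul_one]
  have hJ' := mul_le_mul_of_nonneg_left hJ (by positivity : (0 : ℝ) ≤ 1 / (2 * ψ₁))
  rw [mul_one_div] at hJ'
  linarith [logLaplaceMarginal_le h₁ h₂ hβ hβ1]

end Marginal

/-- Concentration of the log-Laplace marginal at the origin: as |β| → 0 it is
O(|β|^{−1+1/ψ₁}) if ψ₁ > 1, O(−log|β|) if ψ₁ = 1, and O(1) if ψ₁ < 1,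
for any ψ₂ > 0. -/
theorem log_laplace_marginal_concentration (ψ₁ ψ₂ : ℝ)
    (h₁ : 0 < ψ₁) (h₂ : 0 < ψ₂) :
    (ψ₁ > 1 → (fun β => logLaplaceMarginal ψ₁ ψ₂ β) =O[nhdsWithin 0 {(0 : ℝ)}ᶜ]
        fun β => |β| ^ (-1 + 1 / ψ₁)) ∧
    (ψ₁ = 1 → (fun β => logLaplaceMarginal ψ₁ ψ₂ β) =O[nhdsWithin 0 {(0 : ℝ)}ᶜ]
        fun β => -Real.log |β|) ∧
    (ψ₁ < 1 → (fun β => logLaplaceMarginal ψ₁ ψ₂ β) =O[nhdsWithin 0 {(0 : ℝ)}ᶜ]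
        fun _ => (1 : ℝ)) := by
  refine ⟨logLaplaceMarginal_isBigO_rpow h₂, fun hψ => ?_, logLaplaceMarginal_isBigO_one h₁ h₂⟩
  subst hψ
  exact logLaplaceMarginal_isBigO_log h₂
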